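/- arXiv:1404.1153 — 5 statements merged into one kernel-verified Lean document; each statement's English description precedes it below -/
import Mathlib

section
/- For all distinct integers m, n ≥ 2 there exists a finite simple graph which is m-balanced but not n-balanced. -/
open SimpleGraph

/-- A finite simple graph is *k-balanced* if there is a coloring of the vertices with k colors
such that the numbers of vertices of any two colors differ by at most 1 and the numbers of
monochromatic edges of any two colors differ by at most 1. -/
def IsKBalanced (k : ℕ) {V : Type*} (G : SimpleGraph V) : Prop :=
  ∃ c : V → Fin k, ∀ i j : Fin k,
    |(({v | c v = i} : Set V).ncard : ℤ) - (({v | c v = j} : Set V).ncard : ℤ)| ≤ 1 ∧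
    |(({e ∈ G.edgeSet | ∀ v ∈ e, c v = i} : Set (Sym2 V)).ncard : ℤ) -
      (({e ∈ G.edgeSet | ∀ v ∈ e, c v = j} : Set (Sym2 V)).ncard : ℤ)| ≤ 1

/-!
For `m < n` take the complete graph on `N = m (n + 1)` vertices: colouring vertex `v` by
`v mod m` gives `m` classes of `n + 1` vertices each. In a vertex-balanced `n`-colouring every
class has at least `⌊N / n⌋ ≥ 2` vertices, and since `n ∤ N` two classes have sizes `a` and
`a + 1`; they span `a.choose 2` and `a.choose 2 + a` monochromatic edges, which differ by
`a ≥ 2`.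

For `m > n` take a star on `N = 3 m - 1` vertices. In a vertex-balanced `n`-colouring the class
of the centre has at least `⌊N / n⌋ ≥ 3` vertices, hence spans at least two edges, while every
other class spans none. Colouring by residues mod `m` and putting the centre at `m - 1`, whose
class has only `⌊N / m⌋ = 2` vertices, makes every class span at most one edge.
-/

theorem Finset.sum_div_card_le_of_forall_le_add_one {ι : Type*} [Fintype ι] {s : ι → ℕ}
    (hs : ∀ i j, s i ≤ s j + 1) (i : ι) : (∑ j, s j) / Fintype.card ι ≤ s i := by
  have : ∑ j, s j < Fintype.card ι * (s i + 1) :=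
    calc ∑ j, s j < ∑ _j : ι, (s i + 1) :=
          Finset.sum_lt_sum (fun j _ => hs j i) ⟨i, Finset.mem_univ i, Nat.lt_add_one _⟩
      _ = Fintype.card ι * (s i + 1) := by simp
  exact Nat.lt_add_one_iff.mp (Nat.div_lt_of_lt_mul this)

theorem Fin.ncard_setOf_ofNat_eq (N k : ℕ) [NeZero k] (i : Fin k) :
    {v : Fin N | Fin.ofNat k v = i}.ncard = N / k + if (i : ℕ) < N % k then 1 else 0 := by
  rw [← Nat.mod_eq_of_lt i.isLt, ← Nat.count_modEq_card N (NeZero.pos k),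
    Nat.count_eq_card_filter_range,
    Set.ncard_eq_toFinset_card', ← Nat.Iio_eq_range, ← Fin.map_valEmbedding_univ,
    Finset.filter_map, Finset.card_map]
  congr 1
  ext v
  simp [Fin.ext_iff, Nat.ModEq, Nat.mod_eq_of_lt i.isLt]

namespace SimpleGraph

variable {V ι : Type*} {k : ℕ}

-- `(colorClass c i).ncard` and `(monoEdges G c i).ncard` are `v_i(c)` and `e_i(c)`.
def colorClass (c : V → ι) (i : ι) : Set V := {v | c v = i}

def monoEdges (G : SimpleGraph V) (c : V → ι) (i : ι) : Set (Sym2 V) :=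
  {e ∈ G.edgeSet | ∀ v ∈ e, c v = i}

theorem isKBalanced_iff {G : SimpleGraph V} :
    IsKBalanced k G ↔ ∃ c : V → Fin k, ∀ i j,
      (colorClass c i).ncard ≤ (colorClass c j).ncard + 1 ∧
        (monoEdges G c i).ncard ≤ (monoEdges G c j).ncard + 1 := by
  refine exists_congr fun c => ⟨fun h i j => ?_, fun h i j => ?_⟩
  · have := h i j
    simp only [abs_le] at this
    exact ⟨by unfold colorClass; omega, by unfold monoEdges; omega⟩
  · have := h i j
    have := h j i
    simp only [abs_le]
    unfold colorClass monoEdges at *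
    omega

theorem sum_ncard_colorClass [Fintype V] [Fintype ι] (c : V → ι) :
    ∑ i, (colorClass c i).ncard = Fintype.card V := by
  classical
  simp only [colorClass, Set.ncard_eq_toFinset_card', Set.toFinset_ofPred]
  exact (Finset.card_eq_sum_card_fiberwise fun v _ => Finset.mem_univ (c v)).symm

theorem ncard_monoEdges_top (c : V → ι) (i : ι) :
    (monoEdges ⊤ c i).ncard = (colorClass c i).ncard.choose 2 := by
  have : monoEdges ⊤ c i = Sym2.map (↑) '' (Sym2.diagSetᶜ : Set (Sym2 (colorClass c i))) := by
    ext e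
    induction e using Sym2.ind with
    | _ a b =>
    simp only [monoEdges, colorClass, Set.mem_ofPred_eq, mem_edgeSet, top_adj, Sym2.forall_mem_pair]
    constructor
    · rintro ⟨hab, ha, hb⟩
      exact ⟨s(⟨a, ha⟩, ⟨b, hb⟩),
        fun h => hab (congrArg Subtype.val (Sym2.mk_isDiag_iff.mp h)), rfl⟩
    · rintro ⟨x, hx, he⟩
      induction x using Sym2.ind with
      | _ x y =>
      have hxy : (x : V) ≠ y := fun h => hx (Sym2.mk_isDiag_iff.mpr (Subtype.ext h))
      rw [Sym2.map_mk, Sym2.eq_iff] at he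
      rcases he with ⟨rfl, rfl⟩ | ⟨rfl, rfl⟩
      · exact ⟨hxy, x.2, y.2⟩
      · exact ⟨hxy.symm, y.2, x.2⟩
  rw [this, Set.ncard_image_of_injective _ (Sym2.map.injective Subtype.val_injective),
    Sym2.ncard_diagSet_compl, Nat.card_coe_set_eq]

theorem monoEdges_starGraph_of_ne {r : V} {c : V → ι} {i : ι} (h : c r ≠ i) :
    monoEdges (starGraph r) c i = ∅ := by
  refine Set.eq_empty_of_forall_notMem fun e he => ?_
  induction e using Sym2.ind with
  | _ a b =>
  obtain ⟨⟨-, rfl | rfl⟩, hc⟩ := he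
  · exact h (hc _ (Sym2.mem_mk_left _ _))
  · exact h (hc _ (Sym2.mem_mk_right _ _))

theorem ncard_monoEdges_starGraph_self [Finite V] (r : V) (c : V → ι) :
    (monoEdges (starGraph r) c (c r)).ncard = (colorClass c (c r)).ncard - 1 := by
  have : monoEdges (starGraph r) c (c r) = (fun v => s(r, v)) '' (colorClass c (c r) \ {r}) := by
    ext e
    induction e using Sym2.ind with
    | _ a b =>
    simp only [monoEdges, colorClass, Set.mem_ofPred_eq, mem_edgeSet, starGraph_adj,
      Sym2.forall_mem_pair, Set.mem_image, Set.mem_sdiff, Set.mem_singleton_iff]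
    constructor
    · rintro ⟨⟨hab, har | hbr⟩, ha, hb⟩
      · subst har
        exact ⟨b, ⟨hb, Ne.symm hab⟩, rfl⟩
      · subst hbr
        exact ⟨a, ⟨ha, hab⟩, Sym2.eq_swap⟩
    · rintro ⟨v, ⟨hv, hvr⟩, he⟩
      rw [Sym2.eq_iff] at he
      rcases he with ⟨rfl, rfl⟩ | ⟨rfl, rfl⟩
      · exact ⟨⟨Ne.symm hvr, Or.inl rfl⟩, rfl, hv⟩
      · exact ⟨⟨hvr, Or.inr rfl⟩, hv, rfl⟩
  rw [this, Set.ncard_image_of_injective _ fun v w h => Sym2.congr_right.mp h,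
    Set.ncard_sdiff_singleton_of_mem (by rfl)]

theorem div_le_ncard_colorClass [Fintype V] {c : V → Fin k}
    (hc : ∀ i j, (colorClass c i).ncard ≤ (colorClass c j).ncard + 1) (i : Fin k) :
    Fintype.card V / k ≤ (colorClass c i).ncard := by
  simpa [sum_ncard_colorClass] using Finset.sum_div_card_le_of_forall_le_add_one hc i

theorem not_isKBalanced_top [Fintype V] (hk : ¬ k ∣ Fintype.card V)
    (h2k : 2 * k ≤ Fintype.card V) : ¬ IsKBalanced k (⊤ : SimpleGraph V) := by
  rw [isKBalanced_iff]
  rintro ⟨c, hc⟩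
  obtain ⟨v⟩ : Nonempty V :=
    Fintype.card_pos_iff.mp (Nat.pos_of_ne_zero fun h => hk (h ▸ dvd_zero k))
  have hlarge : ∀ i, 2 ≤ (colorClass c i).ncard := fun i =>
    ((Nat.le_div_iff_mul_le (c v).pos).2 (by linarith)).trans
      (div_le_ncard_colorClass (fun i j => (hc i j).1) i)
  obtain ⟨i, j, hij⟩ : ∃ i j, (colorClass c i).ncard < (colorClass c j).ncard := by
    by_contra! hall
    refine hk ⟨(colorClass c (c v)).ncard, ?_⟩
    rw [← sum_ncard_colorClass c,
      Finset.sum_congr rfl fun i _ => le_antisymm (hall (c v) i) (hall i (c v))]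
    simp
  have hsucc : (colorClass c j).ncard = (colorClass c i).ncard + 1 := by
    have := (hc j i).1
    omega
  have := (hc j i).2
  rw [ncard_monoEdges_top, ncard_monoEdges_top, hsucc, Nat.choose_succ_succ',
    Nat.choose_one_right] at this
  linarith [hlarge i]

theorem isKBalanced_top_of_dvd {N : ℕ} [NeZero k] (h : k ∣ N) :
    IsKBalanced k (⊤ : SimpleGraph (Fin N)) := by
  have hclass : ∀ i, (colorClass (fun v : Fin N => Fin.ofNat k v) i).ncard = N / k := fun i => by
    rw [colorClass, Fin.ncard_setOf_ofNat_eq, Nat.mod_eq_zero_of_dvd h, if_neg (Nat.not_lt_zero _),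
      add_zero]
  exact isKBalanced_iff.2 ⟨fun v => Fin.ofNat k v, fun i j => by
    simp only [ncard_monoEdges_top, hclass, le_add_iff_nonneg_right, zero_le, and_self]⟩

theorem isKBalanced_starGraph [Finite V] {c : V → Fin k}
    (hc : ∀ i j, (colorClass c i).ncard ≤ (colorClass c j).ncard + 1) {r : V}
    (hr : (colorClass c (c r)).ncard ≤ 2) : IsKBalanced k (starGraph r) := by
  have hmono : ∀ i, (monoEdges (starGraph r) c i).ncard ≤ 1 := fun i => by
    by_cases h : c r = i
    · rw [← h, ncard_monoEdges_starGraph_self]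
      omega
    · simp [monoEdges_starGraph_of_ne h]
  exact isKBalanced_iff.2 ⟨c, fun i j => ⟨hc i j, (hmono i).trans (Nat.le_add_left 1 _)⟩⟩

theorem isKBalanced_starGraph_fin {N : ℕ} (hkN : k ≤ N) (hN : N < 3 * k) :
    IsKBalanced k (starGraph (⟨k - 1, by omega⟩ : Fin N)) := by
  have : NeZero k := ⟨by omega⟩
  have hclass := Fin.ncard_setOf_ofNat_eq N k
  have hmod : N % k < k := Nat.mod_lt N (NeZero.pos k)
  have hdiv : N / k < 3 := (Nat.div_lt_iff_lt_mul (NeZero.pos k)).2 (by linarith)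
  refine isKBalanced_starGraph (c := fun v : Fin N => Fin.ofNat k v) (fun i j => ?_) ?_
  · simp only [colorClass, hclass]
    split_ifs <;> omega
  · -- the residue `k - 1` is never one of the `N % k` residues that get an extra vertex
    simp only [colorClass, hclass, Fin.val_ofNat,
      Nat.mod_eq_of_lt (Nat.sub_lt (NeZero.pos k) one_pos)]
    split_ifs <;> omega

theorem not_isKBalanced_starGraph [Fintype V] (hk : 2 ≤ k) (hV : 3 * k ≤ Fintype.card V)
    (r : V) : ¬ IsKBalanced k (starGraph r) := by
  rw [isKBalanced_iff]
  rintro ⟨c, hc⟩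
  have : Nontrivial (Fin k) := Fin.nontrivial_iff_two_le.mpr hk
  obtain ⟨j, hj⟩ := exists_ne (c r)
  have hlarge : 3 ≤ (colorClass c (c r)).ncard :=
    ((Nat.le_div_iff_mul_le (by omega)).2 (by linarith)).trans
      (div_le_ncard_colorClass (fun i j => (hc i j).1) (c r))
  have := (hc (c r) j).2
  rw [ncard_monoEdges_starGraph_self, monoEdges_starGraph_of_ne hj.symm, Set.ncard_empty] at this
  omega

end SimpleGraph

theorem exists_m_balanced_not_n_balanced (m n : ℕ) (hm : 2 ≤ m) (hn : 2 ≤ n) (hmn : m ≠ n) :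
    ∃ (N : ℕ) (G : SimpleGraph (Fin N)), IsKBalanced m G ∧ ¬ IsKBalanced n G := by
  rcases hmn.lt_or_gt with hlt | hgt
  · have : NeZero m := ⟨by omega⟩
    refine ⟨m * (n + 1), ⊤, isKBalanced_top_of_dvd (dvd_mul_right m _),
      not_isKBalanced_top ?_ ?_⟩
    · rw [Fintype.card_fin, mul_add_one, Nat.dvd_add_right (dvd_mul_left n m)]
      exact Nat.not_dvd_of_pos_of_lt (by omega) hlt
    · rw [Fintype.card_fin]
      nlinarith
  · exact ⟨3 * m - 1, _, isKBalanced_starGraph_fin (by omega) (by omega),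
      not_isKBalanced_starGraph hn (by rw [Fintype.card_fin]; omega) _⟩
end

section
/- Let ā = (a_1, ..., a_n) be any finite sequence of non-negative integers. Then F(ā) ≤ max(ā), where max(ā) denotes the maximum term of the sequence. -/
open Finset

/-- The *balance* `F(ā)` of a finite sequence of non-negative integers: the minimum of
`|Σ_{k∈I} a_k − Σ_{k∈J} a_k|` over all partitions `{1,…,n} = I ⊔ J` into disjoint sets
whose cardinalities differ by at most 1. -/
noncomputable def balance {n : ℕ} (a : Fin n → ℕ) : ℕ :=
  sInf {d : ℕ | ∃ I : Finset (Fin n),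
    |(I.card : ℤ) - ((Iᶜ : Finset (Fin n)).card : ℤ)| ≤ 1 ∧
    d = ((∑ k ∈ I, (a k : ℤ)) - ∑ k ∈ (Iᶜ : Finset (Fin n)), (a k : ℤ)).natAbs}

lemma myCardAux : ∀ n : ℕ,
    (((Finset.range n).filter (fun i => i % 2 = 0)).card = (n+1)/2) ∧
    (((Finset.range n).filter (fun i => i % 2 = 1)).card = n/2) := by
  intro n
  induction n with
  | zero => simp
  | succ n ih =>
    obtain ⟨h0, h1⟩ := ih
    rw [Finset.range_add_one, Finset.filter_insert, Finset.filter_insert]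
    by_cases h : n % 2 = 0
    · rw [if_pos h, if_neg (by omega), Finset.card_insert_of_notMem (by simp)]
      constructor <;> omega
    · rw [if_neg h, if_pos (by omega), Finset.card_insert_of_notMem (by simp)]
      constructor <;> omega

lemma altSumBound (g : ℕ → ℤ) : ∀ n : ℕ,
    (∀ i j, i ≤ j → j < n → g i ≤ g j) → (∀ i, i < n → 0 ≤ g i) →
    0 ≤ ∑ i ∈ Finset.range n, (-1:ℤ)^(n-1-i) * g i ∧
    ∀ m, n = m + 1 → ∑ i ∈ Finset.range n, (-1:ℤ)^(n-1-i) * g i ≤ g m := by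
  intro n
  induction n with
  | zero => simp
  | succ n ih =>
    intro hmono hpos
    obtain ⟨h0, h1⟩ := ih (fun i j hij hj => hmono i j hij (by omega))
      (fun i hi => hpos i (by omega))
    have key : ∑ i ∈ Finset.range (n+1), (-1:ℤ)^(n+1-1-i) * g i
        = g n - ∑ i ∈ Finset.range n, (-1:ℤ)^(n-1-i) * g i := by
      rw [Finset.sum_range_succ, show n+1-1-n = 0 by omega, pow_zero, one_mul]
      have hc : ∀ i ∈ Finset.range n, (-1:ℤ)^(n+1-1-i) * g i
          = -((-1:ℤ)^(n-1-i) * g i) := by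
        intro i hi
        rw [Finset.mem_range] at hi
        rw [show n+1-1-i = (n-1-i)+1 by omega, pow_succ]
        ring
      rw [Finset.sum_congr rfl hc, Finset.sum_neg_distrib]
      ring
    have hle : ∑ i ∈ Finset.range n, (-1:ℤ)^(n-1-i) * g i ≤ g n := by
      cases n with
      | zero => simpa using hpos 0 (by omega)
      | succ m =>
        exact le_trans (h1 m rfl) (hmono m (m+1) (by omega) (by omega))
    constructor
    · rw [key]; omega
    · intro m hm
      have hmn : m = n := by omega
      subst hmn
      rw [key]; omega

lemma signEq (n i : ℕ) (h : i < n) :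
    ((-1:ℤ))^(n-1-i) = if i % 2 = (n-1) % 2 then 1 else -1 := by
  rcases Nat.even_or_odd (n-1-i) with he | ho
  · obtain ⟨k, hk⟩ := id he
    rw [he.neg_one_pow, if_pos (by omega)]
  · obtain ⟨k, hk⟩ := id ho
    rw [ho.neg_one_pow, if_neg (by omega)]

theorem balance_le_max {n : ℕ} (a : Fin n → ℕ) :
    balance a ≤ Finset.univ.sup a := by
  classical
  set M := Finset.univ.sup a with hM
  set σ := Tuple.sort a with hσ
  have hmono : Monotone (a ∘ σ) := Tuple.monotone_sort a
  set g : ℕ → ℤ := fun i => if h : i < n then (a (σ ⟨i, h⟩) : ℤ) else 0 with hg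
  have hgmono : ∀ i j, i ≤ j → j < n → g i ≤ g j := by
    intro i j hij hj
    simp only [hg]
    rw [dif_pos (by omega : i < n), dif_pos hj]
    have hij' : (⟨i, by omega⟩ : Fin n) ≤ (⟨j, hj⟩ : Fin n) := hij
    exact_mod_cast hmono hij'
  have hgpos : ∀ i, i < n → 0 ≤ g i := by
    intro i hi
    simp only [hg]
    rw [dif_pos hi]
    positivity
  have hgle : ∀ i, i < n → g i ≤ (M : ℤ) := by
    intro i hi
    simp only [hg]
    rw [dif_pos hi]
    exact_mod_cast Finset.le_sup (Finset.mem_univ (σ ⟨i, hi⟩))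
  obtain ⟨hS0, hS1⟩ := altSumBound g n hgmono hgpos
  set S := ∑ i ∈ Finset.range n, (-1:ℤ)^(n-1-i) * g i with hSdef
  have hSM : S ≤ (M : ℤ) := by
    cases n with
    | zero => rw [hSdef]; simp
    | succ m => exact le_trans (hS1 m rfl) (hgle m (by omega))
  -- define the index set
  set P : ℕ → Prop := fun i => i % 2 = (n-1) % 2 with hP
  set I : Finset (Fin n) := Finset.univ.filter (fun j => P ((σ.symm j : Fin n) : ℕ)) with hI
  have hIc : Iᶜ = Finset.univ.filter (fun j => ¬ P ((σ.symm j : Fin n) : ℕ)) := by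
    rw [hI, Finset.compl_filter]
  -- cardinality
  have hcard : I.card = ((Finset.range n).filter P).card := by
    rw [hI, Finset.card_filter, Finset.card_filter]
    rw [← Equiv.sum_comp σ (fun j => if P ((σ.symm j : Fin n) : ℕ) then (1:ℕ) else 0)]
    simp only [Equiv.symm_apply_apply]
    exact Fin.sum_univ_eq_sum_range (fun i => if P i then (1:ℕ) else 0) n
  have hcle : I.card ≤ n := by
    rw [hcard]
    exact le_trans (Finset.card_filter_le _ _) (by simp)
  have hcval : 2 * I.card = n ∨ 2 * I.card = n + 1 := by
    rw [hcard]
    by_cases h : (n-1) % 2 = 0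
    · have h2 := (myCardAux n).1
      have heq : (Finset.range n).filter P = (Finset.range n).filter (fun i => i % 2 = 0) := by
        apply Finset.filter_congr
        intro i _
        simp only [hP, h]
      rw [heq, h2]; omega
    · have h2 := (myCardAux n).2
      have heq : (Finset.range n).filter P = (Finset.range n).filter (fun i => i % 2 = 1) := by
        apply Finset.filter_congr
        intro i _
        simp only [hP]
        omega
      rw [heq, h2]; omega
  have hcardcond : |(I.card : ℤ) - ((Iᶜ : Finset (Fin n)).card : ℤ)| ≤ 1 := by
    rw [Finset.card_compl, Fintype.card_fin, abs_le, Nat.cast_sub hcle]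
    -- (casts already normalized)
    omega
  -- sums
  have hsum1 : ∑ k ∈ I, (a k : ℤ) = ∑ i ∈ (Finset.range n).filter P, g i := by
    rw [hI, Finset.sum_filter, Finset.sum_filter,
      ← Equiv.sum_comp σ (fun j => if P ((σ.symm j : Fin n) : ℕ) then (a j : ℤ) else 0)]
    simp only [Equiv.symm_apply_apply]
    have hcong : ∀ i : Fin n, (if P (i:ℕ) then (a (σ i) : ℤ) else 0)
        = (fun m => if P m then g m else 0) ((i:Fin n):ℕ) := by
      intro i
      simp only [hg]
      rw [dif_pos i.isLt, Fin.eta]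
    rw [Finset.sum_congr rfl (fun i _ => hcong i)]
    exact Fin.sum_univ_eq_sum_range (fun m => if P m then g m else 0) n
  have hsum2 : ∑ k ∈ (Iᶜ : Finset (Fin n)), (a k : ℤ)
      = ∑ i ∈ (Finset.range n).filter (fun i => ¬ P i), g i := by
    rw [hIc, Finset.sum_filter, Finset.sum_filter,
      ← Equiv.sum_comp σ (fun j => if ¬ P ((σ.symm j : Fin n) : ℕ) then (a j : ℤ) else 0)]
    simp only [Equiv.symm_apply_apply]
    have hcong : ∀ i : Fin n, (if ¬ P (i:ℕ) then (a (σ i) : ℤ) else 0)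
        = (fun m => if ¬ P m then g m else 0) ((i:Fin n):ℕ) := by
      intro i
      simp only [hg]
      rw [dif_pos i.isLt, Fin.eta]
    rw [Finset.sum_congr rfl (fun i _ => hcong i)]
    exact Fin.sum_univ_eq_sum_range (fun m => if ¬ P m then g m else 0) n
  have hSsplit : S = (∑ k ∈ I, (a k : ℤ)) - ∑ k ∈ (Iᶜ : Finset (Fin n)), (a k : ℤ) := by
    rw [hsum1, hsum2, hSdef]
    have hc : ∀ i ∈ Finset.range n, (-1:ℤ)^(n-1-i) * g i
        = if P i then g i else -(g i) := by
      intro i hi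
      rw [Finset.mem_range] at hi
      rw [signEq n i hi]
      by_cases h : P i
      · rw [if_pos h, if_pos h, one_mul]
      · rw [if_neg h, if_neg h, neg_one_mul]
    rw [Finset.sum_congr rfl hc, Finset.sum_ite, Finset.sum_neg_distrib]
    ring
  -- conclude
  set d : ℕ := ((∑ k ∈ I, (a k : ℤ)) - ∑ k ∈ (Iᶜ : Finset (Fin n)), (a k : ℤ)).natAbs with hd
  have hmem : d ∈ {d : ℕ | ∃ I : Finset (Fin n),
      |(I.card : ℤ) - ((Iᶜ : Finset (Fin n)).card : ℤ)| ≤ 1 ∧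
      d = ((∑ k ∈ I, (a k : ℤ)) - ∑ k ∈ (Iᶜ : Finset (Fin n)), (a k : ℤ)).natAbs} :=
    ⟨I, hcardcond, hd⟩
  have hdM : d ≤ M := by
    have h1 : (d : ℤ) = S := by
      rw [hd, ← hSsplit]
      exact Int.natAbs_of_nonneg hS0
    have : (d : ℤ) ≤ (M : ℤ) := h1 ▸ hSM
    exact_mod_cast this
  exact le_trans (Nat.sInf_le hmem) hdM
end

section
/- Let d̄ = (d_1, ..., d_n) be a sequence of positive integers with 1 ≤ d_i ≤ n for all i. If the number of indices i with d_i = 1 is at least max(d̄) and the number of indices i with d_i = 2 is at least max(d̄), then d̄ is balanced, i.e., there exists a partition {1, ..., n} = I ⊔ J into disjoint sets whose cardinalities differ by at most 1 such that |Σ_{k∈I} d_k − Σ_{k∈J} d_k| ≤ 2. -/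
/-!
Set aside `M = max d` indices with value 1 and `M` with value 2. Splitting the remaining indices
greedily, with the largest remaining value on one side and the next largest on the other, gives
sides whose sizes differ by 0 or 1 and whose sums differ by some `D ∈ [0, M]`. The reserved
indices are then split with `x` twos and `M - x` ones on the heavier side: the sizes stay as they
were and the sum gap becomes `D + 2x - M`, which is 0 or -1 for `x = ⌊(M - D) / 2⌋`.
-/

open Finset

section SplitGap

variable {ι : Type*} [DecidableEq ι]

def splitGap (s I : Finset ι) (f : ι → ℕ) : ℤ :=
  ∑ i ∈ s, if i ∈ I then (f i : ℤ) else -(f i : ℤ)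

theorem splitGap_union_of_subset {s t I J : Finset ι} (hst : Disjoint s t) (hI : I ⊆ s)
    (hJ : J ⊆ t) (f : ι → ℕ) :
    splitGap (s ∪ t) (I ∪ J) f = splitGap s I f + splitGap t J f := by
  have memI : ∀ i ∈ s, i ∈ I ∪ J ↔ i ∈ I := fun i hi =>
    ⟨fun h => (mem_union.1 h).resolve_right fun hj => disjoint_left.1 hst hi (hJ hj),
      mem_union_left J⟩
  have memJ : ∀ i ∈ t, i ∈ I ∪ J ↔ i ∈ J := fun i hi =>
    ⟨fun h => (mem_union.1 h).resolve_left fun hi' => disjoint_right.1 hst hi (hI hi'),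
      mem_union_right I⟩
  unfold splitGap
  rw [sum_union hst]
  congr 1
  · exact sum_congr rfl fun i hi => by simp only [memI i hi]
  · exact sum_congr rfl fun i hi => by simp only [memJ i hi]

theorem splitGap_eq_two_mul_sub {s I : Finset ι} (hI : I ⊆ s) (f : ι → ℕ) :
    splitGap s I f = 2 * ∑ i ∈ I, (f i : ℤ) - ∑ i ∈ s, (f i : ℤ) := by
  rw [splitGap, sum_ite, filter_mem_eq_inter, inter_eq_right.2 hI, ← sdiff_eq_filter,
    sum_neg_distrib, ← sum_sdiff hI]
  ring

theorem splitGap_of_eq_const {s I : Finset ι} (hI : I ⊆ s) {f : ι → ℕ} {c : ℕ}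
    (hf : ∀ i ∈ s, f i = c) : splitGap s I f = c * (2 * I.card - s.card) := by
  rw [splitGap_eq_two_mul_sub hI, sum_congr rfl fun i hi => congrArg Nat.cast (hf i (hI hi)),
    sum_congr rfl fun i hi => congrArg Nat.cast (hf i hi)]
  simp only [sum_const, nsmul_eq_mul]
  ring

theorem splitGap_univ [Fintype ι] (I : Finset ι) (f : ι → ℕ) :
    splitGap univ I f = ∑ i ∈ I, (f i : ℤ) - ∑ i ∈ Iᶜ, (f i : ℤ) := by
  rw [splitGap_eq_two_mul_sub (subset_univ I), ← sum_add_sum_compl I]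
  ring

theorem exists_splitGap_mem_Icc (f : ι → ℕ) (s : Finset ι) (m : ℕ)
    (hm : ∀ i ∈ s, f i ≤ m) :
    ∃ I ⊆ s, splitGap s I 1 ∈ Icc 0 1 ∧ splitGap s I f ∈ Icc 0 (m : ℤ) := by
  induction s using Finset.strongInduction generalizing m with
  | H s ih => ?_
  rcases s.eq_empty_or_nonempty with rfl | hne
  · exact ⟨∅, empty_subset _, by simp [splitGap]⟩
  obtain ⟨a, ha, hamax⟩ := s.exists_max_image f hne
  rcases (s.erase a).eq_empty_or_nonempty with hsa | hsa
  · have hs : s = {a} := by rw [← insert_erase ha, hsa]; rfl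
    subst hs
    exact ⟨{a}, Subset.rfl, by simp [splitGap], by simpa [splitGap] using hm a ha⟩
  obtain ⟨b, hb, hbmax⟩ := (s.erase a).exists_max_image f hsa
  set t := (s.erase a).erase b
  have hts : t ⊂ s := (erase_ssubset hb).trans (erase_ssubset ha)
  obtain ⟨I, hIt, hIcard, hIf⟩ :=
    ih t hts (f b) fun i hi => hbmax i (mem_of_mem_erase hi)
  have hab : a ≠ b := (ne_of_mem_erase hb).symm
  have hs : s = {a, b} ∪ t := by
    rw [← insert_erase ha, ← insert_erase hb]
    simp [t]
  have hpair : Disjoint {a, b} t := by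
    simp [t]
  have hsplit (g : ι → ℕ) : splitGap s ({a} ∪ I) g = g a - g b + splitGap t I g := by
    rw [hs, splitGap_union_of_subset hpair (by simp) hIt]
    simp [splitGap, sum_pair hab, hab.symm, sub_eq_add_neg]
  refine ⟨{a} ∪ I, ?_, ?_, ?_⟩
  · rw [hs]; exact union_subset_union (by simp) hIt
  · rw [hsplit]; simpa using hIcard
  · have hba : f b ≤ f a := hamax b (mem_of_mem_erase hb)
    have hfa : f a ≤ m := hm a ha
    rw [hsplit]; simp only [mem_Icc] at hIf ⊢; omega

theorem exists_splitGap_ones_twos_cancel {O W : Finset ι} (hOW : Disjoint O W) {f : ι → ℕ}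
    (hO : ∀ i ∈ O, f i = 1) (hW : ∀ i ∈ W, f i = 2) {m : ℕ} (hOm : O.card = m)
    (hWm : W.card = m) {D : ℤ} (hD : D ∈ Icc 0 (m : ℤ)) :
    ∃ J ⊆ O ∪ W, splitGap (O ∪ W) J 1 = 0 ∧ |D + splitGap (O ∪ W) J f| ≤ 1 := by
  rw [mem_Icc] at hD
  obtain ⟨x, hxm, hx⟩ : ∃ x : ℕ, x ≤ m ∧ |D + 2 * x - m| ≤ 1 :=
    ⟨((m - D) / 2).toNat, by omega, by rw [abs_le]; omega⟩
  subst hOm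
  obtain ⟨O₁, hO₁, hO₁card⟩ := exists_subset_card_eq (Nat.sub_le O.card x)
  obtain ⟨W₁, hW₁, hW₁card⟩ := exists_subset_card_eq (hWm ▸ hxm)
  refine ⟨O₁ ∪ W₁, union_subset_union hO₁ hW₁, ?_, ?_⟩
  · rw [splitGap_union_of_subset hOW hO₁ hW₁,
      splitGap_of_eq_const (f := 1) hO₁ fun _ _ => rfl,
      splitGap_of_eq_const (f := 1) hW₁ fun _ _ => rfl]
    push_cast [hO₁card, hW₁card, hWm, Nat.cast_sub hxm]
    ring
  · rw [splitGap_union_of_subset hOW hO₁ hW₁, splitGap_of_eq_const hO₁ hO,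
      splitGap_of_eq_const hW₁ hW]
    push_cast [hO₁card, hW₁card, hWm, Nat.cast_sub hxm]
    convert hx using 2
    ring

end SplitGap

theorem balanced_of_many_ones_and_twos_general (n : ℕ) (d : Fin n → ℕ)
    (h1 : Finset.univ.sup d ≤ (Finset.univ.filter (fun i => d i = 1)).card)
    (h2 : Finset.univ.sup d ≤ (Finset.univ.filter (fun i => d i = 2)).card) :
    ∃ I : Finset (Fin n),
      |(I.card : ℤ) - ((Iᶜ : Finset (Fin n)).card : ℤ)| ≤ 1 ∧
      |(∑ k ∈ I, (d k : ℤ)) - ∑ k ∈ (Iᶜ : Finset (Fin n)), (d k : ℤ)| ≤ 2 := by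
  obtain ⟨O, hO, hOcard⟩ := exists_subset_card_eq h1
  obtain ⟨W, hW, hWcard⟩ := exists_subset_card_eq h2
  have hOW : Disjoint O W := (disjoint_filter.2 fun i _ hi1 hi2 => by omega).mono hO hW
  obtain ⟨I, hI, hIcard, hIsum⟩ :=
    exists_splitGap_mem_Icc d (O ∪ W)ᶜ _ fun i _ => le_sup (mem_univ i)
  obtain ⟨J, hJ, hJcard, hJsum⟩ := exists_splitGap_ones_twos_cancel hOW
    (fun i hi => (mem_filter.1 (hO hi)).2) (fun i hi => (mem_filter.1 (hW hi)).2)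
    hOcard hWcard hIsum
  have hgap (f : Fin n → ℕ) :
      splitGap univ (I ∪ J) f = splitGap (O ∪ W)ᶜ I f + splitGap (O ∪ W) J f := by
    rw [← union_compl (O ∪ W), union_comm I,
      splitGap_union_of_subset disjoint_compl_right hJ hI, add_comm]
  refine ⟨I ∪ J, ?_, ?_⟩
  · have hcard := hgap 1
    simp only [splitGap_univ, Pi.one_apply, Nat.cast_one, sum_const, nsmul_one, mem_Icc]
      at hcard hIcard
    rw [hcard, hJcard, abs_le]
    omega
  · rw [← splitGap_univ, hgap]
    simp only [mem_Icc] at hIsum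
    rw [abs_le] at hJsum ⊢
    omega

theorem balanced_of_many_ones_and_twos (n : ℕ) (d : Fin n → ℕ)
    (hle : ∀ i, 1 ≤ d i ∧ d i ≤ n)
    (h1 : Finset.univ.sup d ≤ (Finset.univ.filter (fun i => d i = 1)).card)
    (h2 : Finset.univ.sup d ≤ (Finset.univ.filter (fun i => d i = 2)).card) :
    ∃ I : Finset (Fin n),
      |(I.card : ℤ) - ((Iᶜ : Finset (Fin n)).card : ℤ)| ≤ 1 ∧
      |(∑ k ∈ I, (d k : ℤ)) - ∑ k ∈ (Iᶜ : Finset (Fin n)), (d k : ℤ)| ≤ 2 :=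
  balanced_of_many_ones_and_twos_general n d h1 h2
end

section
/- The star S_n on n vertices (a tree consisting of one center vertex adjacent to n − 1 leaves) is balanced if and only if n ≤ 5. -/
open SimpleGraph

/-- A finite simple graph is *balanced* if there is a 2-coloring of the vertices such that
the numbers of vertices of the two colors differ by at most 1 and the numbers of
monochromatic edges of the two colors differ by at most 1. -/
def IsBalanced {V : Type*} (G : SimpleGraph V) : Prop :=
  ∃ c : V → Fin 2,
    |(({v | c v = 0} : Set V).ncard : ℤ) - (({v | c v = 1} : Set V).ncard : ℤ)| ≤ 1 ∧
    |(({e ∈ G.edgeSet | ∀ v ∈ e, c v = 0} : Set (Sym2 V)).ncard : ℤ) -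
      (({e ∈ G.edgeSet | ∀ v ∈ e, c v = 1} : Set (Sym2 V)).ncard : ℤ)| ≤ 1

/-- The star `S_n` on `n` vertices: the vertex `0` (the center) is adjacent to
all other vertices, and there are no other edges. -/
def starGraph (n : ℕ) : SimpleGraph (Fin n) :=
  SimpleGraph.fromRel (fun v _ => v.val = 0)

/-! Every edge of a star contains the centre, so only the centre's colour class spans edges, one
for each other vertex in it. A colouring is therefore balanced exactly when the class sizes differ
by at most one and the centre's class has at most two vertices, which leaves room for at most
`2 + 3 = 5` vertices; for `n ≤ 5` the classes `{0, 3}` and the rest will do. -/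

namespace SimpleGraph

variable {V α : Type*}

theorem sep_edgeSet_starGraph_eq_image (r : V) (p : V → Prop) :
    {e ∈ (starGraph r).edgeSet | ∀ v ∈ e, p v} = (s(r, ·)) '' {v | v ≠ r ∧ p r ∧ p v} := by
  ext e
  induction e using Sym2.ind with
  | _ a b =>
    simp only [Set.mem_ofPred_eq, mem_edgeSet, starGraph_adj, Sym2.mem_iff, Set.mem_image,
      Sym2.eq_iff]
    constructor
    · rintro ⟨⟨hab, rfl | rfl⟩, hp⟩
      · exact ⟨b, ⟨Ne.symm hab, hp _ (.inl rfl), hp _ (.inr rfl)⟩, .inl ⟨rfl, rfl⟩⟩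
      · exact ⟨a, ⟨hab, hp _ (.inr rfl), hp _ (.inl rfl)⟩, .inr ⟨rfl, rfl⟩⟩
    · rintro ⟨v, ⟨hv, hr, hpv⟩, ⟨rfl, rfl⟩ | ⟨rfl, rfl⟩⟩
      · exact ⟨⟨Ne.symm hv, .inl rfl⟩, by rintro w (rfl | rfl) <;> assumption⟩
      · exact ⟨⟨hv, .inr rfl⟩, by rintro w (rfl | rfl) <;> assumption⟩

theorem ncard_monochromatic_starGraph [DecidableEq α] (r : V) (c : V → α) (i : α) :
    {e ∈ (starGraph r).edgeSet | ∀ v ∈ e, c v = i}.ncard =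
      if c r = i then {v | c v = i}.ncard - 1 else 0 := by
  rw [sep_edgeSet_starGraph_eq_image,
    Set.ncard_image_of_injective _ fun _ _ => Sym2.congr_right.mp]
  split_ifs with h
  · rw [← Set.ncard_sdiff_singleton_of_mem (show r ∈ {v | c v = i} from h)]
    congr 1
    ext v
    simp [h, and_comm]
  · simp [h]

end SimpleGraph

theorem ncard_eq_zero_add_ncard_eq_one {V : Type*} [Finite V] (c : V → Fin 2) :
    {v | c v = 0}.ncard + {v | c v = 1}.ncard = Nat.card V := by
  have : {v | c v = 1} = {v | c v = 0}ᶜ := by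
    ext v
    simp only [Set.mem_compl_iff, Set.mem_ofPred_eq, Fin.ext_iff]
    omega
  rw [this, Set.ncard_add_ncard_compl]

theorem starGraph_succ_eq_starGraph_zero (k : ℕ) :
    _root_.starGraph (k + 1) = SimpleGraph.starGraph 0 := by
  ext a b
  simp only [_root_.starGraph, SimpleGraph.starGraph, SimpleGraph.fromRel_adj, Fin.ext_iff,
    Fin.val_zero]

theorem isBalanced_starGraph_iff {V : Type*} (r : V) :
    IsBalanced (SimpleGraph.starGraph r) ↔ ∃ c : V → Fin 2,
      |({v | c v = 0}.ncard : ℤ) - ({v | c v = 1}.ncard : ℤ)| ≤ 1 ∧ {v | c v = c r}.ncard ≤ 2 := by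
  refine exists_congr fun c => and_congr_right fun _ => ?_
  simp only [SimpleGraph.ncard_monochromatic_starGraph]
  obtain h | h := Fin.exists_fin_two.mp ⟨c r, rfl⟩ <;> simp [h]

theorem card_le_five_of_isBalanced_starGraph {V : Type*} [Finite V] {r : V}
    (h : IsBalanced (SimpleGraph.starGraph r)) : Nat.card V ≤ 5 := by
  obtain ⟨c, hv, hr⟩ := (isBalanced_starGraph_iff r).mp h
  rw [abs_le] at hv
  rw [← ncard_eq_zero_add_ncard_eq_one c]
  obtain h | h := Fin.exists_fin_two.mp ⟨c r, rfl⟩ <;> rw [h] at hr <;> omega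

theorem star_balanced_iff_general (n : ℕ) :
    IsBalanced (_root_.starGraph n) ↔ n ≤ 5 := by
  obtain _ | k := n
  · exact iff_of_true ⟨finZeroElim, by simp⟩ (by norm_num)
  rw [starGraph_succ_eq_starGraph_zero]
  refine ⟨fun h => by simpa using card_le_five_of_isBalanced_starGraph h, fun hn => ?_⟩
  have hk : k ≤ 4 := by omega
  refine (isBalanced_starGraph_iff 0).mpr ⟨fun v => if v.val = 0 ∨ v.val = 3 then 0 else 1, ?_⟩
  simp only [Set.ncard_eq_toFinset_card']
  interval_cases k <;> decide

theorem star_balanced_iff (n : ℕ) (hn : 1 ≤ n) :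
    IsBalanced (_root_.starGraph n) ↔ n ≤ 5 :=
  star_balanced_iff_general n
end

section
/- Let p, q be positive integers and let G be the double star S_{p,q}: the tree on p + q + 2 vertices consisting of two adjacent vertices u and v, where u is additionally adjacent to p leaves and v is additionally adjacent to q leaves. Then G is balanced if and only if |p − q| ≤ 3. -/
open SimpleGraph

/-- The double star `S_{p,q}` on `p + q + 2` vertices: vertex `0` (= `u`) is adjacent to
vertex `1` (= `v`), the vertices `2, …, p+1` are the leaves adjacent to `u`, and the
vertices `p+2, …, p+q+1` are the leaves adjacent to `v`. -/
def doubleStar (p q : ℕ) : SimpleGraph (Fin (p + q + 2)) :=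
  SimpleGraph.fromRel (fun a b =>
    (a.val = 0 ∧ b.val = 1) ∨
    (a.val = 0 ∧ 2 ≤ b.val ∧ b.val < p + 2) ∨
    (a.val = 1 ∧ p + 2 ≤ b.val))

/-!
Write `a`, `b` for the colours of the centres `u`, `v`. If `a = b`, all `p + q + 1` edges
at the centres would be monochromatic of that colour unless every leaf gets the other colour,
and then vertex balance forces `p + q ≤ 3`. If `a ≠ b`, say `a = 0`, `b = 1`, let `A` be the
number of leaves at `u` coloured `0` and `B` the number at `v` coloured `1`: the monochromatic
edges are `A` of colour `0` and `B` of colour `1`, while the colour classes have sizes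
`1 + A + (q - B)` and `1 + (p - A) + B`. Balance thus reads `|A - B| ≤ 1` and
`|2(A - B) - (p - q)| ≤ 1`, which is solvable iff `|p - q| ≤ 3`, with `A, B ∈ {0, 1}`.
-/

open Finset

lemma ncard_setOf_eq_sum {α : Type*} [Fintype α] (P : α → Prop) [DecidablePred P] :
    {x | P x}.ncard = ∑ x, if P x then 1 else 0 := by
  rw [Set.ncard_eq_toFinset_card', Set.toFinset_ofPred, card_filter]

lemma card_filter_eq_zero_add_card_filter_eq_one {ι : Type*} [Fintype ι] (x : ι → Fin 2) :
    #{k | x k = 0} + #{k | x k = 1} = Fintype.card ι := by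
  have : ∀ t : Fin 2, t = 1 ↔ ¬t = 0 := by decide
  simp only [this, card_filter_add_card_filter_not, card_univ]

lemma exists_card_filter_eq_zero {ι : Type*} [Fintype ι] {A : ℕ} (hA : A ≤ Fintype.card ι) :
    ∃ x : ι → Fin 2, #{k | x k = 0} = A := by
  classical
  obtain ⟨S, -, hS⟩ := exists_subset_card_eq (s := (univ : Finset ι)) hA
  refine ⟨fun k => if k ∈ S then 0 else 1, ?_⟩
  simpa using hS

namespace DoubleStar

variable {p q : ℕ}

def leafU (i : Fin p) : Fin (p + q + 2) := (Fin.castAdd q i).succ.succ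

def leafV (j : Fin q) : Fin (p + q + 2) := (Fin.natAdd p j).succ.succ

-- The parent of `k` in the tree rooted at `u = 0`; `hub 0` is a junk value.
def hub (k : Fin (p + q + 2)) : Fin (p + q + 2) := if k.val < p + 2 then 0 else 1

@[simp] lemma val_leafU (i : Fin p) : (leafU (q := q) i).val = i + 2 := rfl

@[simp] lemma val_leafV (j : Fin q) : (leafV (p := p) j).val = p + j + 2 := rfl

lemma sum_univ_eq {M : Type*} [AddCommMonoid M] (f : Fin (p + q + 2) → M) :
    ∑ k, f k = f 0 + f 1 + ∑ i, f (leafU i) + ∑ j, f (leafV j) := by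
  rw [Fin.sum_univ_succ, Fin.sum_univ_succ, Fin.sum_univ_add]
  simp only [leafU, leafV, Fin.succ_zero_eq_one, add_assoc]

@[simp] lemma hub_one : hub (1 : Fin (p + q + 2)) = 0 := by simp [hub]

@[simp] lemma hub_leafU (i : Fin p) : hub (leafU (q := q) i) = 0 := by simp [hub]

@[simp] lemma hub_leafV (j : Fin q) : hub (leafV (p := p) j) = 1 := by simp [hub]

@[simp] lemma leafU_ne_zero (i : Fin p) : leafU (q := q) i ≠ 0 := by simp [Fin.ext_iff]

@[simp] lemma leafV_ne_zero (j : Fin q) : leafV (p := p) j ≠ 0 := by simp [Fin.ext_iff]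

lemma adj_iff {a b : Fin (p + q + 2)} :
    (doubleStar p q).Adj a b ↔ (b ≠ 0 ∧ a = hub b) ∨ (a ≠ 0 ∧ b = hub a) := by
  simp only [doubleStar, fromRel_adj, hub]
  split_ifs <;> simp only [ne_eq, Fin.ext_iff, Fin.val_zero, Fin.val_one] <;> omega

lemma edgeSet_eq :
    (doubleStar p q).edgeSet = (fun k => s(hub k, k)) '' {k | k ≠ 0} := by
  ext e
  induction e using Sym2.ind with
  | _ a b =>
    rw [mem_edgeSet, adj_iff]
    constructor
    · rintro (⟨hb, rfl⟩ | ⟨ha, rfl⟩)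
      · exact ⟨b, hb, rfl⟩
      · exact ⟨a, ha, Sym2.eq_swap⟩
    · rintro ⟨k, hk, he⟩
      rcases Sym2.eq_iff.mp he with ⟨rfl, rfl⟩ | ⟨rfl, rfl⟩
      · exact Or.inl ⟨hk, rfl⟩
      · exact Or.inr ⟨hk, rfl⟩

lemma injOn_edge : Set.InjOn (fun k : Fin (p + q + 2) => s(hub k, k)) {k | k ≠ 0} := by
  intro a ha b hb he
  rcases Sym2.eq_iff.mp he with ⟨-, h⟩ | ⟨hab, hba⟩
  · exact h
  · simp only [Set.mem_ofPred_eq, hub, Fin.ext_iff] at ha hb hab hba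
    split_ifs at hab hba <;> simp only [Fin.val_zero, Fin.val_one] at hab hba <;> omega

lemma ncard_colorClass (c : Fin (p + q + 2) → Fin 2) (i : Fin 2) :
    {v | c v = i}.ncard = (if c 0 = i then 1 else 0) + (if c 1 = i then 1 else 0)
      + #{k | c (leafU k) = i} + #{k | c (leafV k) = i} := by
  rw [ncard_setOf_eq_sum, sum_univ_eq]
  simp only [sum_boole, Nat.cast_id]

lemma ncard_monochromaticEdges (c : Fin (p + q + 2) → Fin 2) (i : Fin 2) :
    {e ∈ (doubleStar p q).edgeSet | ∀ v ∈ e, c v = i}.ncard =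
      (if c 0 = i ∧ c 1 = i then 1 else 0)
      + (if c 0 = i then #{k | c (leafU k) = i} else 0)
      + (if c 1 = i then #{k | c (leafV k) = i} else 0) := by
  have hmono : {e ∈ (doubleStar p q).edgeSet | ∀ v ∈ e, c v = i} =
      (fun k => s(hub k, k)) '' {k | k ≠ 0 ∧ ∀ v ∈ s(hub k, k), c v = i} := by
    rw [edgeSet_eq]
    exact (Set.image_inter_preimage _ _ _).symm
  rw [hmono, (injOn_edge.mono fun k hk => hk.1).ncard_image, ncard_setOf_eq_sum, sum_univ_eq]
  by_cases h0 : c 0 = i <;> by_cases h1 : c 1 = i <;> simp [h0, h1]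

lemma abs_sub_le_three_of_isBalanced (h : IsBalanced (doubleStar p q)) :
    |(p : ℤ) - q| ≤ 3 := by
  obtain ⟨c, hv, he⟩ := h
  rw [ncard_colorClass, ncard_colorClass] at hv
  rw [ncard_monochromaticEdges, ncard_monochromaticEdges] at he
  have hx := card_filter_eq_zero_add_card_filter_eq_one fun k => c (leafU (q := q) k)
  have hy := card_filter_eq_zero_add_card_filter_eq_one fun k => c (leafV (p := p) k)
  simp only [Fintype.card_fin] at hx hy
  generalize c 0 = a at hv he
  generalize c 1 = b at hv he
  rw [abs_le] at hv he ⊢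
  fin_cases a <;> fin_cases b <;>
    simp only [Fin.zero_eta, Fin.mk_one, ↓reduceIte, one_ne_zero, zero_ne_one, and_self,
      and_true, and_false] at hv he <;>
    omega

def mkColoring (a b : Fin 2) (x : Fin p → Fin 2) (y : Fin q → Fin 2) : Fin (p + q + 2) → Fin 2 :=
  Fin.cons a (Fin.cons b (Fin.append x y))

section mkColoring

variable (a b : Fin 2) (x : Fin p → Fin 2) (y : Fin q → Fin 2)

@[simp] lemma mkColoring_zero : mkColoring a b x y 0 = a := rfl

@[simp] lemma mkColoring_one : mkColoring a b x y 1 = b := rfl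

@[simp] lemma mkColoring_leafU (i : Fin p) : mkColoring a b x y (leafU i) = x i := by
  simp [mkColoring, leafU]

@[simp] lemma mkColoring_leafV (j : Fin q) : mkColoring a b x y (leafV j) = y j := by
  simp [mkColoring, leafV]

end mkColoring

lemma isBalanced_of_leafCounts {A B : ℕ} (hA : A ≤ p) (hB : B ≤ q)
    (hedge : |(A : ℤ) - B| ≤ 1) (hvert : |2 * ((A : ℤ) - B) - (p - q)| ≤ 1) :
    IsBalanced (doubleStar p q) := by
  obtain ⟨x, hx⟩ := exists_card_filter_eq_zero (ι := Fin p) (by simpa using hA)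
  obtain ⟨y, hy⟩ := exists_card_filter_eq_zero (ι := Fin q) (A := q - B) (by simp)
  have hx' := card_filter_eq_zero_add_card_filter_eq_one x
  have hy' := card_filter_eq_zero_add_card_filter_eq_one y
  simp only [Fintype.card_fin] at hx' hy'
  refine ⟨mkColoring 0 1 x y, ?_, ?_⟩
  · rw [ncard_colorClass, ncard_colorClass, abs_le]
    rw [abs_le] at hvert
    simp only [mkColoring_zero, mkColoring_one, mkColoring_leafU, mkColoring_leafV, ↓reduceIte,
      one_ne_zero, zero_ne_one]
    omega
  · rw [ncard_monochromaticEdges, ncard_monochromaticEdges, abs_le]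
    rw [abs_le] at hedge
    simp only [mkColoring_zero, mkColoring_one, mkColoring_leafU, mkColoring_leafV, ↓reduceIte,
      one_ne_zero, zero_ne_one, and_true, and_false]
    omega

end DoubleStar

theorem doubleStar_balanced_iff_general (p q : ℕ) :
    IsBalanced (doubleStar p q) ↔ |(p : ℤ) - (q : ℤ)| ≤ 3 := by
  refine ⟨DoubleStar.abs_sub_le_three_of_isBalanced, fun h => ?_⟩
  rw [abs_le] at h
  obtain hpq | hqp | hclose : q + 2 ≤ p ∨ p + 2 ≤ q ∨ (p ≤ q + 1 ∧ q ≤ p + 1) := by omega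
  · exact DoubleStar.isBalanced_of_leafCounts (A := 1) (B := 0) (by omega) (by omega)
      (by norm_num) (abs_le.mpr ⟨by omega, by omega⟩)
  · exact DoubleStar.isBalanced_of_leafCounts (A := 0) (B := 1) (by omega) (by omega)
      (by norm_num) (abs_le.mpr ⟨by omega, by omega⟩)
  · exact DoubleStar.isBalanced_of_leafCounts (A := 0) (B := 0) (by omega) (by omega)
      (by norm_num) (abs_le.mpr ⟨by omega, by omega⟩)

theorem doubleStar_balanced_iff (p q : ℕ) (hp : 1 ≤ p) (hq : 1 ≤ q) :
    IsBalanced (doubleStar p q) ↔ |(p : ℤ) - (q : ℤ)| ≤ 3 :=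
  doubleStar_balanced_iff_general p q
end
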